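/- Let m ≥ 1, R > 1, and let 𝒜 = (A_n)_{n∈ℤ} be linear isomorphisms of ℝ^{m+1} with ‖A_n‖ < R and ‖A_n⁻¹‖ < R. Let (e_k)_{k∈ℤ} be unit vectors in ℝ^{m+1} with e_{k+1} = A_k e_k / ‖A_k e_k‖ for all k; let S_k be the orthogonal complement of e_k, Q_k the orthogonal projection of ℝ^{m+1} onto S_k, and B_k : S_k → S_{k+1} the map B_k v = Q_{k+1}(A_k v). If 𝒜 has property SG(γ) for some γ ∈ (0,1), then the projected system (B_k) also has property SG(γ): there exists L > 0 such that for every i ∈ ℤ, N ≥ 1 and every sequence (w_k ∈ S_k)_{i+1 ≤ k ≤ i+N} with ‖w_k‖ ≤ 1, there exists (v_k ∈ S_k)_{i ≤ k ≤ i+N} with v_{k+1} = B_k v_k + w_{k+1} for i ≤ k ≤ i+N−1 and ‖v_k‖ ≤ L·N^γ. -/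

import Mathlib

/-! Project a bounded solution `v` of the full system: `Q k (v k)` solves the projected system.
Since `A k` maps the line `ℝ e k` into the line `ℝ e (k+1)`, which `Q (k+1)` kills, the component
of `v k` along `e k` is invisible after applying `Q (k+1) ∘ A k`; and `Q k` does not increase
norms, so the bound `L N^γ` survives. -/

noncomputable section

abbrev Euc (m : ℕ) := EuclideanSpace ℝ (Fin m)

/-- Slow growth property with exponent γ. -/
def SG (m : ℕ) (A : ℤ → Euc m ≃L[ℝ] Euc m) (γ : ℝ) : Prop :=
  ∃ L : ℝ, 0 < L ∧ ∀ (i : ℤ) (N : ℕ), 1 ≤ N →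
    ∀ w : ℤ → Euc m, (∀ k : ℤ, i + 1 ≤ k → k ≤ i + N → ‖w k‖ ≤ 1) →
    ∃ v : ℤ → Euc m,
      (∀ k : ℤ, i ≤ k → k ≤ i + N - 1 → v (k + 1) = A k (v k) + w (k + 1)) ∧
      (∀ k : ℤ, i ≤ k → k ≤ i + N → ‖v k‖ ≤ L * (N : ℝ) ^ γ)

/-- The orthogonal complement `S k` of the unit vector `e k`. -/
def Sperp (m : ℕ) (e : ℤ → Euc m) (k : ℤ) : Submodule ℝ (Euc m) :=
  (ℝ ∙ e k)ᗮ

/-- The orthogonal projection of `Euc m` onto `S k`, as a map `Euc m → Euc m`. -/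
def projS (m : ℕ) (e : ℤ → Euc m) (k : ℤ) : Euc m →L[ℝ] Euc m :=
  (Sperp m e k).subtypeL.comp (Submodule.orthogonalProjection (Sperp m e k))

open Submodule

theorem mem_span_singleton_inv_norm_smul {E : Type*} [NormedAddCommGroup E] [NormedSpace ℝ E]
    (x : E) : x ∈ ℝ ∙ (‖x‖⁻¹ • x) := by
  rcases eq_or_ne x 0 with rfl | hx
  · exact zero_mem _
  · exact mem_span_singleton.mpr
      ⟨‖x‖, by rw [smul_smul, mul_inv_cancel₀ (norm_ne_zero_iff.mpr hx), one_smul]⟩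

section

variable {E F : Type*} [NormedAddCommGroup E] [InnerProductSpace ℝ E]
  [NormedAddCommGroup F] [InnerProductSpace ℝ F]

theorem starProjection_orthogonal_span_singleton_map_starProjection {x : E} {y : F}
    (T : E →L[ℝ] F) (hT : T x ∈ ℝ ∙ y) (v : E) :
    (ℝ ∙ y)ᗮ.starProjection (T ((ℝ ∙ x)ᗮ.starProjection v)) = (ℝ ∙ y)ᗮ.starProjection (T v) := by
  have hline : v - (ℝ ∙ x)ᗮ.starProjection v ∈ ℝ ∙ x := by
    simpa only [orthogonal_orthogonal] using sub_starProjection_mem_orthogonal (K := (ℝ ∙ x)ᗮ) v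
  have hTline : T (v - (ℝ ∙ x)ᗮ.starProjection v) ∈ ℝ ∙ y := by
    obtain ⟨t, ht⟩ := mem_span_singleton.mp hline
    rw [← ht, map_smul]
    exact smul_mem _ t hT
  have hkill : (ℝ ∙ y)ᗮ.starProjection (T (v - (ℝ ∙ x)ᗮ.starProjection v)) = 0 :=
    (starProjection_apply_eq_zero_iff _).mpr (le_orthogonal_orthogonal _ hTline)
  rwa [map_sub, map_sub, sub_eq_zero, eq_comm] at hkill

theorem starProjection_orthogonal_span_singleton_map_add {x : E} {y : F}
    (T : E →L[ℝ] F) (hT : T x ∈ ℝ ∙ y) (v : E) {w : F} (hw : w ∈ (ℝ ∙ y)ᗮ) :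
    (ℝ ∙ y)ᗮ.starProjection (T v + w) =
      (ℝ ∙ y)ᗮ.starProjection (T ((ℝ ∙ x)ᗮ.starProjection v)) + w := by
  rw [map_add, starProjection_eq_self_iff.mpr hw,
    starProjection_orthogonal_span_singleton_map_starProjection T hT]

end

theorem projected_system_has_slow_growth_general
    (m : ℕ)
    (A : ℤ → Euc (m + 1) ≃L[ℝ] Euc (m + 1))
    (e : ℤ → Euc (m + 1))
    (herec : ∀ k : ℤ, e (k + 1) = ‖A k (e k)‖⁻¹ • A k (e k))
    (γ : ℝ) (hSG : SG (m + 1) A γ) :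
    ∃ L : ℝ, 0 < L ∧ ∀ (i : ℤ) (N : ℕ), 1 ≤ N →
      ∀ w : ℤ → Euc (m + 1),
        (∀ k : ℤ, i + 1 ≤ k → k ≤ i + N → w k ∈ Sperp (m + 1) e k) →
        (∀ k : ℤ, i + 1 ≤ k → k ≤ i + N → ‖w k‖ ≤ 1) →
      ∃ v : ℤ → Euc (m + 1),
        (∀ k : ℤ, i ≤ k → k ≤ i + N → v k ∈ Sperp (m + 1) e k) ∧
        (∀ k : ℤ, i ≤ k → k ≤ i + N - 1 →
          v (k + 1) = projS (m + 1) e (k + 1) (A k (v k)) + w (k + 1)) ∧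
        (∀ k : ℤ, i ≤ k → k ≤ i + N → ‖v k‖ ≤ L * (N : ℝ) ^ γ) := by
  obtain ⟨L, hL, hsolve⟩ := hSG
  refine ⟨L, hL, fun i N hN w hwS hw => ?_⟩
  obtain ⟨v, hvrec, hvnorm⟩ := hsolve i N hN w hw
  refine ⟨fun k => projS (m + 1) e k (v k), fun k _ _ => starProjection_apply_mem _ _,
    fun k hik hkN => ?_,
    fun k hik hkN => (norm_starProjection_apply_le _ _).trans (hvnorm k hik hkN)⟩
  have hAe : A k (e k) ∈ ℝ ∙ e (k + 1) := herec k ▸ mem_span_singleton_inv_norm_smul _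
  beta_reduce
  rw [hvrec k hik hkN]
  exact starProjection_orthogonal_span_singleton_map_add (A k : Euc (m + 1) →L[ℝ] Euc (m + 1))
    hAe (v k) (hwS (k + 1) (by omega) (by omega))

/-- The projected system `B k = Q (k+1) ∘ A k` inherits the slow growth
property SG(γ) from the full system (induction step of Theorem 3.5). -/
theorem projected_system_has_slow_growth
    (m : ℕ) (hm : 1 ≤ m) (R : ℝ) (hR : 1 < R)
    (A : ℤ → Euc (m + 1) ≃L[ℝ] Euc (m + 1))
    (hAbound : ∀ n : ℤ, ‖(A n : Euc (m + 1) →L[ℝ] Euc (m + 1))‖ < R ∧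
      ‖((A n).symm : Euc (m + 1) →L[ℝ] Euc (m + 1))‖ < R)
    (e : ℤ → Euc (m + 1)) (he : ∀ k : ℤ, ‖e k‖ = 1)
    (herec : ∀ k : ℤ, e (k + 1) = ‖A k (e k)‖⁻¹ • A k (e k))
    (γ : ℝ) (hγ : γ ∈ Set.Ioo (0 : ℝ) 1) (hSG : SG (m + 1) A γ) :
    ∃ L : ℝ, 0 < L ∧ ∀ (i : ℤ) (N : ℕ), 1 ≤ N →
      ∀ w : ℤ → Euc (m + 1),
        (∀ k : ℤ, i + 1 ≤ k → k ≤ i + N → w k ∈ Sperp (m + 1) e k) →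
        (∀ k : ℤ, i + 1 ≤ k → k ≤ i + N → ‖w k‖ ≤ 1) →
      ∃ v : ℤ → Euc (m + 1),
        (∀ k : ℤ, i ≤ k → k ≤ i + N → v k ∈ Sperp (m + 1) e k) ∧
        (∀ k : ℤ, i ≤ k → k ≤ i + N - 1 →
          v (k + 1) = projS (m + 1) e (k + 1) (A k (v k)) + w (k + 1)) ∧
        (∀ k : ℤ, i ≤ k → k ≤ i + N → ‖v k‖ ≤ L * (N : ℝ) ^ γ) :=
  projected_system_has_slow_growth_general m A e herec γ hSG
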